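/- For every type T (i.e. every tuple [m_1, ..., m_r] with r ≥ 3, 2 ≤ m_1 ≤ ... ≤ m_r, Θ(T) > 0, α(T) := 4/Θ(T) a positive integer, and m_i ∣ α(T) for all i), one has α(T) ≤ 168. -/

import Mathlib

/-!
Since `α · Θ = 4`, it suffices that a positive `Θ` is at least `1/42` (the Hurwitz gap). With five
or more entries, each at least `2`, `Θ ≥ 1/2`; with four, `Θ = 0` for `[2,2,2,2]` and otherwise
`Θ ≥ 1/6`. With three, `Θ = 1 - (1/p + 1/q + 1/r)`, and a case analysis on the two smallest entries
shows that a sum of three reciprocals below `1` is at most `1/2 + 1/3 + 1/7 = 41/42`.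
-/

/-- For a tuple `T = [m₁, ..., m_r]`, `Θ(T) := -2 + ∑ᵢ (1 - 1/mᵢ)` as a rational number. -/
def Theta (T : List ℕ) : ℚ :=
  -2 + (T.map (fun m => 1 - (1 : ℚ) / m)).sum

/-- `T` is a type: `T = [m₁, ..., m_r]` with `r ≥ 3`, `2 ≤ m₁ ≤ ... ≤ m_r`, `Θ(T) > 0`,
`α(T) = 4/Θ(T)` a positive integer, and `mᵢ ∣ α(T)` for all `i`. -/
def IsType (T : List ℕ) : Prop :=
  3 ≤ T.length ∧ T.Pairwise (· ≤ ·) ∧ (∀ m ∈ T, 2 ≤ m) ∧ 0 < Theta T ∧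
    ∃ a : ℕ, 0 < a ∧ (a : ℚ) * Theta T = 4 ∧ ∀ m ∈ T, m ∣ a

theorem one_div_le_one_div_succ_of_one_div_lt {k r : ℕ} (hk : 0 < k) (hr : 0 < r)
    (h : (1 : ℚ) / r < 1 / k) : (1 : ℚ) / r ≤ 1 / (k + 1) := by
  have hkr : (k : ℚ) < r := (one_div_lt_one_div (by positivity) (by positivity)).1 h
  have : k + 1 ≤ r := by exact_mod_cast hkr
  gcongr
  exact_mod_cast this

theorem one_div_add_one_div_add_one_div_le_of_lt_one {p q r : ℕ} (hp : 2 ≤ p) (hpq : p ≤ q)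
    (hqr : q ≤ r) (h : (1 : ℚ) / p + 1 / q + 1 / r < 1) :
    (1 : ℚ) / p + 1 / q + 1 / r ≤ 41 / 42 := by
  have hr : 0 < r := by omega
  have hq : (0 : ℚ) < q := by exact_mod_cast (by omega : 0 < q)
  have hqr' : (1 : ℚ) / r ≤ 1 / q := by gcongr
  have hr' : (0 : ℚ) < 1 / r := by positivity
  obtain rfl | rfl | hp4 : p = 2 ∨ p = 3 ∨ 4 ≤ p := by omega
  · obtain rfl | rfl | rfl | rfl | hq6 : q = 2 ∨ q = 3 ∨ q = 4 ∨ q = 5 ∨ 6 ≤ q := by omega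
    · push_cast at h; linarith
    · have := one_div_le_one_div_succ_of_one_div_lt (k := 6) (by norm_num) hr
        (by push_cast at h ⊢; linarith)
      push_cast at this ⊢; linarith
    · have := one_div_le_one_div_succ_of_one_div_lt (k := 4) (by norm_num) hr
        (by push_cast at h ⊢; linarith)
      push_cast at this ⊢; linarith
    · push_cast at hqr' ⊢; linarith
    · have : (1 : ℚ) / q ≤ 1 / 6 := by gcongr; exact_mod_cast hq6
      push_cast; linarith
  · obtain rfl | hq4 : q = 3 ∨ 4 ≤ q := by omega
    · have := one_div_le_one_div_succ_of_one_div_lt (k := 3) (by norm_num) hr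
        (by push_cast at h ⊢; linarith)
      push_cast at this ⊢; linarith
    · have : (1 : ℚ) / q ≤ 1 / 4 := by gcongr; exact_mod_cast hq4
      push_cast; linarith
  · have : (1 : ℚ) / p ≤ 1 / 4 := by gcongr; exact_mod_cast hp4
    have : (1 : ℚ) / q ≤ 1 / 4 := by gcongr; exact_mod_cast hp4.trans hpq
    linarith

theorem one_div_add_one_div_add_one_div_add_one_div_le_of_lt_two {p q r s : ℕ} (hp : 2 ≤ p)
    (hpq : p ≤ q) (hqr : q ≤ r) (hrs : r ≤ s) (h : (1 : ℚ) / p + 1 / q + 1 / r + 1 / s < 2) :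
    (1 : ℚ) / p + 1 / q + 1 / r + 1 / s ≤ 11 / 6 := by
  obtain hs3 | rfl : 3 ≤ s ∨ s = 2 := by omega
  · have : (1 : ℚ) / p ≤ 1 / 2 := by gcongr; exact_mod_cast hp
    have : (1 : ℚ) / q ≤ 1 / 2 := by gcongr; exact_mod_cast hp.trans hpq
    have : (1 : ℚ) / r ≤ 1 / 2 := by gcongr; exact_mod_cast hp.trans (hpq.trans hqr)
    have : (1 : ℚ) / s ≤ 1 / 3 := by gcongr; exact_mod_cast hs3
    linarith
  · obtain ⟨rfl, rfl, rfl⟩ : p = 2 ∧ q = 2 ∧ r = 2 := by omega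
    norm_num at h

theorem Theta_cons (m : ℕ) (l : List ℕ) : Theta (m :: l) = Theta l + (1 - 1 / m) := by
  simp [Theta]
  ring

theorem neg_two_add_length_div_two_le_Theta {l : List ℕ} (h2 : ∀ m ∈ l, 2 ≤ m) :
    -2 + (l.length : ℚ) / 2 ≤ Theta l := by
  induction l with
  | nil => simp [Theta]
  | cons m l ih =>
    have hm : (1 : ℚ) / m ≤ 1 / 2 := by gcongr; exact_mod_cast h2 m List.mem_cons_self
    rw [Theta_cons, List.length_cons, Nat.cast_succ]
    linarith [ih fun k hk => h2 k (List.mem_cons_of_mem m hk)]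

theorem one_div_42_le_Theta {T : List ℕ} (h3 : 3 ≤ T.length) (hs : T.Pairwise (· ≤ ·))
    (h2 : ∀ m ∈ T, 2 ≤ m) (hpos : 0 < Theta T) : 1 / 42 ≤ Theta T := by
  match T, h3 with
  | [p, q, r], _ =>
    have hTheta : Theta [p, q, r] = 1 - (1 / p + 1 / q + 1 / r) := by simp [Theta]; ring
    simp only [List.pairwise_cons, List.mem_cons, List.not_mem_nil] at hs
    rw [hTheta] at hpos ⊢
    linarith [one_div_add_one_div_add_one_div_le_of_lt_one (h2 p (by simp))
      (hs.1 q (by simp)) (hs.2.1 r (by simp)) (by linarith)]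
  | [p, q, r, s], _ =>
    have hTheta : Theta [p, q, r, s] = 2 - (1 / p + 1 / q + 1 / r + 1 / s) := by
      simp [Theta]; ring
    simp only [List.pairwise_cons, List.mem_cons, List.not_mem_nil] at hs
    rw [hTheta] at hpos ⊢
    linarith [one_div_add_one_div_add_one_div_add_one_div_le_of_lt_two (h2 p (by simp))
      (hs.1 q (by simp)) (hs.2.1 r (by simp)) (hs.2.2.1 s (by simp)) (by linarith)]
  | _ :: _ :: _ :: _ :: _ :: l, _ =>
    have := neg_two_add_length_div_two_le_Theta h2
    simp only [List.length_cons, Nat.cast_add, Nat.cast_one] at this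
    linarith [(l.length.cast_nonneg : (0 : ℚ) ≤ l.length)]

/-- For every type `T`, its `α`-value (the positive integer `a` with `a · Θ(T) = 4`,
i.e. `a = 4/Θ(T)`) satisfies `α(T) ≤ 168`. -/
theorem alpha_le_168_of_isType (T : List ℕ) (hT : IsType T)
    (a : ℕ) (ha : (a : ℚ) * Theta T = 4) :
    a ≤ 168 := by
  obtain ⟨h3, hs, h2, hpos, -⟩ := hT
  have hTheta := one_div_42_le_Theta h3 hs h2 hpos
  have : (a : ℚ) ≤ 168 := by
    calc (a : ℚ) = 42 * (a * (1 / 42)) := by ring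
      _ ≤ 42 * (a * Theta T) := by gcongr
      _ = 168 := by rw [ha]; norm_num
  exact_mod_cast this
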